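/- arXiv:1808.00499 — 2 statements merged into one kernel-verified Lean document; each statement's English description precedes it below -/
import Mathlib

section
/- Given any assignment z of a finite ordered set of orders {1,…,n} to trolleys {1,…,T} (each order to exactly one trolley), there exists a permutation (relabeling) of the trolleys such that the relabeled assignment satisfies: for every order o ≥ 2 and trolley t ≥ 2, if order o is not assigned to any trolley r < t and no order q < o is assigned to trolley t, then order o is assigned to trolley t. -/
/-- Any assignment can be relabeled into a "restricted growth string":
every label strictly below the label of order `o` is used by some
earlier order. -/
lemma rgs_exists {T : ℕ} : ∀ (n : ℕ) (z : Fin n → Fin T),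
    ∃ σ : Equiv.Perm (Fin T), ∀ (o : Fin n) (t : Fin T),
      t < σ (z o) → ∃ q : Fin n, q < o ∧ σ (z q) = t := by
  intro n
  induction n with
  | zero => exact fun z => ⟨1, fun o => o.elim0⟩
  | succ n ih =>
    intro z
    obtain ⟨σ, hσ⟩ := ih (fun i => z i.castSucc)
    set v := σ (z (Fin.last n)) with hv
    by_cases h : ∀ t : Fin T, t < v → ∃ q : Fin n, σ (z q.castSucc) = t
    · refine ⟨σ, fun o t ht => ?_⟩
      induction o using Fin.lastCases with
      | last =>
        obtain ⟨q, hq⟩ := h t ht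
        exact ⟨q.castSucc, Fin.castSucc_lt_last q, hq⟩
      | cast i =>
        obtain ⟨q, hq, hval⟩ := hσ i t ht
        exact ⟨q.castSucc, by simpa using hq, hval⟩
    · push_neg at h
      -- set of unused labels below v
      set s : Finset (Fin T) :=
        Finset.univ.filter (fun t => t < v ∧ ∀ q : Fin n, σ (z q.castSucc) ≠ t) with hs
      have hsne : s.Nonempty := by
        obtain ⟨t, ht, hun⟩ := h
        exact ⟨t, by simp [hs, ht, hun]⟩
      set t₀ := s.min' hsne with ht₀
      have ht₀mem : t₀ ∈ s := s.min'_mem hsne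
      have ht₀lt : t₀ < v := (Finset.mem_filter.mp ht₀mem).2.1
      have ht₀un : ∀ q : Fin n, σ (z q.castSucc) ≠ t₀ :=
        (Finset.mem_filter.mp ht₀mem).2.2
      have ht₀min : ∀ t ∈ s, t₀ ≤ t := fun t ht => s.min'_le t ht
      -- every earlier label is < t₀
      have hearly : ∀ q : Fin n, σ (z q.castSucc) < t₀ := by
        intro q
        rcases lt_trichotomy (σ (z q.castSucc)) t₀ with hlt | heq | hgt
        · exact hlt
        · exact absurd heq (ht₀un q)
        · obtain ⟨q', hq', hval⟩ := hσ q t₀ hgt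
          exact absurd hval (ht₀un q')
      refine ⟨σ.trans (Equiv.swap t₀ v), fun o t ht => ?_⟩
      have hswap_fix : ∀ q : Fin n,
          (σ.trans (Equiv.swap t₀ v)) (z q.castSucc) = σ (z q.castSucc) := by
        intro q
        simp only [Equiv.trans_apply]
        exact Equiv.swap_apply_of_ne_of_ne (ne_of_lt (hearly q))
          (ne_of_lt ((hearly q).trans ht₀lt))
      have hlast : (σ.trans (Equiv.swap t₀ v)) (z (Fin.last n)) = t₀ := by
        simp only [Equiv.trans_apply, ← hv, Equiv.swap_apply_right]
      induction o using Fin.lastCases with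
      | last =>
        rw [hlast] at ht
        -- t < t₀, so by minimality t is used by some earlier order
        have htv : t < v := ht.trans ht₀lt
        have : ∃ q : Fin n, σ (z q.castSucc) = t := by
          by_contra hc
          push_neg at hc
          exact absurd (ht₀min t (by simp [hs, htv, hc])) (not_le.mpr ht)
        obtain ⟨q, hq⟩ := this
        exact ⟨q.castSucc, Fin.castSucc_lt_last q, (hswap_fix q).trans hq⟩
      | cast i =>
        rw [hswap_fix i] at ht
        obtain ⟨q, hq, hval⟩ := hσ i t ht
        exact ⟨q.castSucc, by simpa using hq, (hswap_fix q).trans hval⟩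

/-- For any assignment `z` of orders `Fin n` (0-indexed; order `o+1` in the
paper) to trolleys `Fin T`, there is a relabeling (permutation) `σ` of the
trolleys such that the relabeled assignment `σ ∘ z` satisfies the
symmetry-breaking condition: for every order `o ≥ 2` and trolley `t ≥ 2`
(1-indexed), if order `o` is not assigned to any trolley `r < t` and no order
`q < o` is assigned to trolley `t`, then order `o` is assigned to trolley `t`. -/
theorem stmt_2 {n T : ℕ} (z : Fin n → Fin T) :
    ∃ σ : Equiv.Perm (Fin T), ∀ (o : Fin n) (t : Fin T),
      0 < (o : ℕ) → 0 < (t : ℕ) →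
      (∀ r : Fin T, r < t → σ (z o) ≠ r) →
      (∀ q : Fin n, q < o → σ (z q) ≠ t) →
      σ (z o) = t := by
  obtain ⟨σ, hσ⟩ := rgs_exists n z
  refine ⟨σ, fun o t _ _ h1 h2 => ?_⟩
  rcases lt_trichotomy (σ (z o)) t with hlt | heq | hgt
  · exact absurd rfl (h1 (σ (z o)) hlt)
  · exact heq
  · obtain ⟨q, hq, hval⟩ := hσ o t hgt
    exact absurd hval (h2 q hq)
end

section
/- Under a nonnegative symmetric distance metric satisfying the triangle inequality, the optimal value of the distance-approximation formulation is a lower bound on the optimal total distance of the joint order batching and no-reversal picker routing problem: for any feasible batching with no-reversal routes, the route of each trolley induces a feasible solution of the approximation whose objective value does not exceed the route length. -/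
open scoped Classical

/-- Grid vertices: `none` is the origin, `some (r, a)` is the vertex on
cross-aisle `r` at aisle `a`. -/
abbrev WVertex : Type := Option (ℕ × ℕ)

/-- Position of a vertex, given aisle horizontal coordinates `hx`,
cross-aisle vertical coordinates `vy`, and origin abscissa `ox` (the origin
lies on the first cross-aisle). -/
def wpos (hx vy : ℕ → ℝ) (ox : ℝ) : WVertex → ℝ × ℝ
  | none => (ox, vy 0)
  | some (r, a) => (hx a, vy r)

/-- Rectilinear distance between two grid vertices: nonnegative, symmetric and
satisfying the triangle inequality. -/
def wdist (hx vy : ℕ → ℝ) (ox : ℝ) (v w : WVertex) : ℝ :=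
  |(wpos hx vy ox v).1 - (wpos hx vy ox w).1| +
    |(wpos hx vy ox v).2 - (wpos hx vy ox w).2|

/-- One step in a warehouse with `WA` aisles and `WB` blocks: an aisle edge
(full subaisle, so only no-reversal routes can be modeled), a cross-aisle edge,
or an edge joining the origin to the first cross-aisle. -/
def wstep (WA WB : ℕ) (v w : WVertex) : Prop :=
  (∃ r a, r + 1 ≤ WB ∧ a < WA ∧
      ((v = some (r, a) ∧ w = some (r + 1, a)) ∨
        (w = some (r, a) ∧ v = some (r + 1, a)))) ∨
  (∃ r a, r ≤ WB ∧ a + 1 < WA ∧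
      ((v = some (r, a) ∧ w = some (r, a + 1)) ∨
        (w = some (r, a) ∧ v = some (r, a + 1)))) ∨
  (∃ a, a < WA ∧ ((v = none ∧ w = some (0, a)) ∨ (w = none ∧ v = some (0, a))))

/-- Total length of a walk, given as a list of successively adjacent vertices. -/
def wlength (hx vy : ℕ → ℝ) (ox : ℝ) (walk : List WVertex) : ℝ :=
  ((walk.zip walk.tail).map (fun p => wdist hx vy ox p.1 p.2)).sum

/-- The walk traverses (in either direction) the subaisle edge of aisle `a`
in block `r` (between cross-aisles `r` and `r + 1`). -/
def wtraverses (walk : List WVertex) (r a : ℕ) : Prop :=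
  (some (r, a), some (r + 1, a)) ∈ walk.zip walk.tail ∨
    (some (r + 1, a), some (r, a)) ∈ walk.zip walk.tail

/-- Length of a 1-dimensional path given by a list of reals. -/
private def pathlen (xs : List ℝ) : ℝ :=
  ((xs.zip xs.tail).map (fun p => |p.1 - p.2|)).sum

private lemma pathlen_cons_cons (a b : ℝ) (t : List ℝ) :
    pathlen (a :: b :: t) = |a - b| + pathlen (b :: t) := by
  simp [pathlen]

private lemma pathlen_head_last : ∀ (xs : List ℝ) (x y : ℝ),
    xs.head? = some x → xs.getLast? = some y → |y - x| ≤ pathlen xs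
  | [], x, y, hh, _ => by simp at hh
  | [a], x, y, hh, hl => by
      simp only [List.head?_cons, Option.some.injEq] at hh
      have hl' : a = y := by simpa using hl
      subst hh; subst hl'
      simp [pathlen]
  | a :: b :: t, x, y, hh, hl => by
      simp only [List.head?_cons, Option.some.injEq] at hh
      subst hh
      have hl' : (b :: t).getLast? = some y := by
        rwa [List.getLast?_cons_cons] at hl
      have ih := pathlen_head_last (b :: t) b y rfl hl'
      rw [pathlen_cons_cons]
      have tri : |y - a| ≤ |y - b| + |b - a| := abs_sub_le y b a
      have hc : |b - a| = |a - b| := abs_sub_comm b a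
      linarith

private lemma pathlen_mid : ∀ (xs : List ℝ) (x y m : ℝ),
    xs.head? = some x → xs.getLast? = some y → m ∈ xs →
    |m - x| + |y - m| ≤ pathlen xs
  | [], x, y, m, hh, _, _ => by simp at hh
  | [a], x, y, m, hh, hl, hm => by
      simp only [List.head?_cons, Option.some.injEq] at hh
      have hl' : a = y := by simpa using hl
      have hm' : m = a := by simpa using hm
      subst hh; subst hl'; subst hm'
      simp [pathlen]
  | a :: b :: t, x, y, m, hh, hl, hm => by
      simp only [List.head?_cons, Option.some.injEq] at hh
      subst hh
      have hl' : (b :: t).getLast? = some y := by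
        rwa [List.getLast?_cons_cons] at hl
      rw [pathlen_cons_cons]
      rcases List.mem_cons.1 hm with h | h
      · subst h
        have ih := pathlen_head_last (b :: t) b y rfl hl'
        have tri : |y - m| ≤ |y - b| + |b - m| := abs_sub_le y b m
        have hc : |b - m| = |m - b| := abs_sub_comm b m
        simp only [sub_self, abs_zero]
        linarith
      · have ih := pathlen_mid (b :: t) b y m rfl hl' h
        have tri : |m - a| ≤ |m - b| + |b - a| := abs_sub_le m b a
        have hc : |b - a| = |a - b| := abs_sub_comm b a
        linarith

private lemma list_toFinset_sum_le {α : Type*} [DecidableEq α] (l : List α)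
    (f : α → ℝ) (hf : ∀ a, 0 ≤ f a) :
    ∑ a ∈ l.toFinset, f a ≤ (l.map f).sum := by
  induction l with
  | nil => simp
  | cons a l ih =>
    simp only [List.toFinset_cons, List.map_cons, List.sum_cons]
    by_cases h : a ∈ l.toFinset
    · rw [Finset.insert_eq_self.2 h]
      linarith [hf a]
    · rw [Finset.sum_insert h]
      linarith

private lemma list_sum_map_add {α : Type*} (l : List α) (f g : α → ℝ) :
    (l.map (fun e => f e + g e)).sum = (l.map f).sum + (l.map g).sum := by
  induction l with
  | nil => simp
  | cons a l ih => simp [ih]; ring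

/-- The distance-approximation objective is a lower bound on the length of any
(no-reversal) closed trolley route from the origin: the route length is at
least the sum of the lengths of the distinct aisle edges traversed, plus the
distance from the origin to the westmost aisle `aF` used in block 1, plus the
distance back to the origin from the eastmost aisle `aL` used in block 1, plus
the cross-aisle distance between `aF` and `aL`. -/
theorem stmt_8 (WA WB : ℕ) (hx vy : ℕ → ℝ) (ox : ℝ)
    (hmono : Monotone hx) (hox : ox ≤ hx 0)
    (walk : List WVertex)
    (hchain : walk.Chain' (wstep WA WB))
    (hhead : walk.head? = some none) (hlast : walk.getLast? = some none)
    (aF aL : ℕ)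
    (hF : wtraverses walk 0 aF) (hL : wtraverses walk 0 aL)
    (hext : ∀ a, wtraverses walk 0 a → aF ≤ a ∧ a ≤ aL) :
    (∑ p ∈ (Finset.range WB ×ˢ Finset.range WA).filter
        (fun p => wtraverses walk p.1 p.2), |vy (p.1 + 1) - vy p.1|)
      + ((hx aF - ox) + (hx aL - ox)) + (hx aL - hx aF)
      ≤ wlength hx vy ox walk := by
  classical
  set steps := walk.zip walk.tail with hsteps
  set fX : WVertex × WVertex → ℝ :=
    fun e => |(wpos hx vy ox e.1).1 - (wpos hx vy ox e.2).1| with hfX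
  set fY : WVertex × WVertex → ℝ :=
    fun e => |(wpos hx vy ox e.1).2 - (wpos hx vy ox e.2).2| with hfY
  -- split the walk length into horizontal and vertical parts
  have hsplit : wlength hx vy ox walk = (steps.map fX).sum + (steps.map fY).sum := by
    rw [← list_sum_map_add]
    rfl
  -- the vertical part
  set S := (Finset.range WB ×ˢ Finset.range WA).filter
      (fun p => wtraverses walk p.1 p.2) with hS
  set E : ℕ × ℕ → WVertex × WVertex := fun p =>
    if (some (p.1, p.2), some (p.1 + 1, p.2)) ∈ steps then
      ((some (p.1, p.2) : WVertex), (some (p.1 + 1, p.2) : WVertex))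
    else ((some (p.1 + 1, p.2) : WVertex), (some (p.1, p.2) : WVertex)) with hE
  have hE_mem : ∀ p ∈ S, E p ∈ steps := by
    intro p hp
    have htr : wtraverses walk p.1 p.2 := (Finset.mem_filter.1 hp).2
    rw [hE]
    by_cases h : (some (p.1, p.2), some (p.1 + 1, p.2)) ∈ steps
    · simpa [h] using h
    · rcases htr with h' | h'
      · exact absurd h' h
      · simpa [h] using h'
  have hE_val : ∀ p : ℕ × ℕ, fY (E p) = |vy (p.1 + 1) - vy p.1| := by
    intro p
    rw [hE]
    by_cases h : (some (p.1, p.2), some (p.1 + 1, p.2)) ∈ steps <;>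
      simp [h, hfY, wpos, abs_sub_comm]
  have hE_inj : ∀ p p' : ℕ × ℕ, E p = E p' → p = p' := by
    intro p p' h
    simp only [hE] at h
    split_ifs at h <;>
      · simp only [Prod.mk.injEq, Option.some.injEq] at h
        obtain ⟨⟨h1, h2⟩, h3, h4⟩ := h
        exact Prod.ext (by omega) (by omega)
  have hvert : (∑ p ∈ S, |vy (p.1 + 1) - vy p.1|) ≤ (steps.map fY).sum := by
    have h1 : (∑ p ∈ S, |vy (p.1 + 1) - vy p.1|) = ∑ q ∈ S.image E, fY q := by
      rw [Finset.sum_image (fun p _ p' _ h => hE_inj p p' h)]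
      exact Finset.sum_congr rfl (fun p _ => (hE_val p).symm)
    have h2 : S.image E ⊆ steps.toFinset := by
      intro q hq
      rcases Finset.mem_image.1 hq with ⟨p, hp, rfl⟩
      exact List.mem_toFinset.2 (hE_mem p hp)
    have h3 : ∑ q ∈ S.image E, fY q ≤ ∑ q ∈ steps.toFinset, fY q :=
      Finset.sum_le_sum_of_subset_of_nonneg h2 (fun q _ _ => abs_nonneg _)
    have h4 := list_toFinset_sum_le steps fY (fun q => abs_nonneg _)
    linarith
  -- the horizontal part
  set g : WVertex → ℝ := fun v => (wpos hx vy ox v).1 with hg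
  have hzip : (walk.map g).zip (walk.map g).tail = steps.map (Prod.map g g) := by
    rw [← List.map_tail, List.zip_map]
  have hpath : pathlen (walk.map g) = (steps.map fX).sum := by
    rw [pathlen, hzip, List.map_map]
    rfl
  have hmem : (some (0, aL) : WVertex) ∈ walk := by
    rcases hL with h | h
    · exact (List.of_mem_zip h).1
    · exact List.mem_of_mem_tail (List.of_mem_zip h).2
  have hmemX : hx aL ∈ walk.map g := List.mem_map.2 ⟨some (0, aL), hmem, rfl⟩
  have hheadX : (walk.map g).head? = some ox := by
    rw [List.head?_map, hhead]; rfl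
  have hlastX : (walk.map g).getLast? = some ox := by
    rw [List.getLast?_map, hlast]; rfl
  have hhor := pathlen_mid (walk.map g) ox ox (hx aL) hheadX hlastX hmemX
  have haL : ox ≤ hx aL := le_trans hox (hmono (Nat.zero_le aL))
  have habs1 : |hx aL - ox| = hx aL - ox := abs_of_nonneg (by linarith)
  have habs2 : |ox - hx aL| = hx aL - ox := by
    rw [abs_sub_comm]; exact habs1
  rw [hpath, habs1, habs2] at hhor
  rw [hsplit]
  have : (∑ p ∈ S, |vy (p.1 + 1) - vy p.1|)
      + ((hx aF - ox) + (hx aL - ox)) + (hx aL - hx aF)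
      = (∑ p ∈ S, |vy (p.1 + 1) - vy p.1|) + ((hx aL - ox) + (hx aL - ox)) := by
    ring
  rw [this]
  linarith
end
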